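/- Let n ≥ 2, m ≥ 2 and v ≥ 1 be integers. Let J(2^n, R_m)_v denote the set of elements of R_m = ℤ[x_1, ..., x_m] of the form Σ_{t=1}^v ε_t f_t^{2^n} with f_t ∈ R_m and ε_t ∈ {+1, −1}. Let Π: J(2^n, R_m) → (ℤ/2ℤ)^{P} (P the set of pairs (i, j) with 1 ≤ i < j ≤ m) be the additive group homomorphism whose (i, j)-component sends each generator f^{2^n} to the residue mod 2 of c_{f^{2^n}}(x_i x_j)/2^n + c_{f^{2^n}}(x_i^{2^{n−1}} x_j^{2^{n−1}})/2. Then the image Π(J(2^n, R_m)_v) has at most 2^{v·m} elements. -/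

import Mathlib

/-!
Write `a_i` for the coefficient of `x_i` in `f`, `c` for its constant term and `d` for the
coefficient of `x_i x_j`. Differentiating twice gives `c_{f^N}(x_i x_j) = N((N-1)c^{N-2} a_i a_j +
c^{N-1} d)`. For the second coefficient, Frobenius gives `f^{2^{n-1}} ≡ f(x^{2^{n-1}}) (mod 2)`,
hence `f^{2^n} ≡ (f^2)(x^{2^{n-1}}) (mod 4)`, so `c_{f^{2^n}}(x_i^{2^{n-1}} x_j^{2^{n-1}}) ≡
c_{f^2}(x_i x_j) = 2(a_i a_j + c d) (mod 4)`. Adding up, the `(i, j)` component of `Π(f^{2^n})` is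
`(1 + c) a_i a_j = w_i w_j` with `w_i = (1 + c) a_i ∈ ℤ/2ℤ`. Signs are invisible mod 2, so `Π`
of a signed sum of `v` powers is `Σ_t w_{t,i} w_{t,j}`, determined by `v · m` elements of `ℤ/2ℤ`.
-/

open MvPolynomial Finsupp

theorem zmod_two_pow_eq_self {k : ℕ} (hk : k ≠ 0) (x : ZMod 2) : x ^ k = x := by
  fin_cases x
  · exact zero_pow hk
  · exact one_pow k

theorem Int.cast_ediv_two_of_modEq {x y : ℤ} (h : x ≡ 2 * y [ZMOD 4]) :
    ((x / 2 : ℤ) : ZMod 2) = y := by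
  obtain ⟨k, hk⟩ := Int.modEq_iff_dvd.1 h.symm
  rw [show x = 2 * (y + 2 * k) by omega, Int.mul_ediv_cancel_left _ two_ne_zero]
  push_cast
  rw [show (2 : ZMod 2) = 0 from rfl]
  ring

namespace MvPolynomial

variable {σ R : Type*}

section pderiv

variable [CommSemiring R]

theorem constantCoeff_pderiv (i : σ) (f : MvPolynomial σ R) :
    constantCoeff (pderiv i f) = coeff (single i 1) f := by
  rw [constantCoeff_eq, coeff_pderiv, zero_add]
  simp

theorem constantCoeff_pderiv_pderiv {i j : σ} (hij : i ≠ j) (f : MvPolynomial σ R) :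
    constantCoeff (pderiv i (pderiv j f)) = coeff (single i 1 + single j 1) f := by
  rw [constantCoeff_pderiv, coeff_pderiv, single_eq_of_ne hij.symm]
  simp

theorem coeff_single_add_single_pow {i j : σ} (hij : i ≠ j) (f : MvPolynomial σ R) (N : ℕ) :
    coeff (single i 1 + single j 1) (f ^ N) =
      N * ((N - 1 : ℕ) * constantCoeff f ^ (N - 2) * coeff (single i 1) f * coeff (single j 1) f +
        constantCoeff f ^ (N - 1) * coeff (single i 1 + single j 1) f) := by
  rw [← constantCoeff_pderiv_pderiv hij, ← constantCoeff_pderiv_pderiv hij, pderiv_pow,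
    ← map_natCast C, mul_assoc, pderiv_C_mul, pderiv_mul, pderiv_pow, ← map_natCast C]
  simp only [map_mul, map_add, map_pow, constantCoeff_C, constantCoeff_pderiv, Nat.sub_sub,
    one_add_one_eq_two]

end pderiv

variable {p : ℕ} [Fact p.Prime]

theorem expand_prime_pow_eq_pow (k : ℕ) (F : MvPolynomial σ (ZMod p)) :
    expand (p ^ k) F = F ^ p ^ k := by
  induction k generalizing F with
  | zero => simp
  | succ k ih => rw [pow_succ, expand_mul, expand_zmod, ih, ← pow_mul, mul_comm]

theorem C_dvd_pow_prime_pow_sub_expand (k : ℕ) (f : MvPolynomial σ ℤ) :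
    C (p : ℤ) ∣ f ^ p ^ k - expand (p ^ k) f := by
  rw [C_dvd_iff_zmod, map_sub, map_pow, map_expand, expand_prime_pow_eq_pow, sub_self]

theorem coeff_smul_pow_prime_pow_modEq (k : ℕ) (f : MvPolynomial σ ℤ) (μ : σ →₀ ℕ) :
    coeff (p ^ k • μ) (f ^ p ^ (k + 1)) ≡ coeff μ (f ^ p) [ZMOD p ^ 2] := by
  have h : C ((p : ℤ) ^ 2) ∣ (f ^ p ^ k) ^ p - (expand (p ^ k) f) ^ p := by
    have hp : ((p : ℕ) : MvPolynomial σ ℤ) ∣ f ^ p ^ k - expand (p ^ k) f := by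
      simpa [map_natCast] using C_dvd_pow_prime_pow_sub_expand k f
    simpa [map_natCast] using dvd_sub_pow_of_dvd_sub hp 1
  rw [← pow_mul, ← pow_succ, ← map_pow, C_dvd_iff_dvd_coeff] at h
  have := h (p ^ k • μ)
  rw [coeff_sub, coeff_expand_smul _ (pow_ne_zero _ (Fact.out : p.Prime).ne_zero)] at this
  exact (Int.modEq_iff_dvd.2 this).symm

variable {i j : σ} (hij : i ≠ j) (f : MvPolynomial σ ℤ) {n : ℕ}
include hij

theorem cast_coeff_single_add_single_pow_two_pow_div (hn : 2 ≤ n) :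
    ((coeff (single i 1 + single j 1) (f ^ 2 ^ n) / 2 ^ n : ℤ) : ZMod 2) =
      constantCoeff f * (coeff (single i 1) f * coeff (single j 1) f +
        coeff (single i 1 + single j 1) f) := by
  have h1 : 2 ^ n - 1 ≠ 0 := by have := Nat.one_lt_two_pow (n := n) (by omega); omega
  have h2 : 2 ^ n - 2 ≠ 0 := by
    have := Nat.pow_le_pow_right (n := 2) (by norm_num) hn; omega
  rw [coeff_single_add_single_pow hij, Nat.cast_pow, Nat.cast_ofNat,
    Int.mul_ediv_cancel_left _ (by positivity)]
  push_cast [Nat.cast_sub (Nat.one_le_two_pow)]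
  rw [zmod_two_pow_eq_self h1, zmod_two_pow_eq_self h2,
    show (2 : ZMod 2) = 0 from rfl, zero_pow (by omega), zero_sub, neg_one_mul,
    ZMod.neg_eq_self_mod_two]
  ring

theorem cast_coeff_single_add_single_pow_two_pow_div_two (hn : 1 ≤ n) :
    ((coeff (single i (2 ^ (n - 1)) + single j (2 ^ (n - 1))) (f ^ 2 ^ n) / 2 : ℤ) : ZMod 2) =
      coeff (single i 1) f * coeff (single j 1) f +
        constantCoeff f * coeff (single i 1 + single j 1) f := by
  obtain ⟨k, rfl⟩ := Nat.exists_eq_add_of_le' hn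
  have hμ : single i (2 ^ k) + single j (2 ^ k) = 2 ^ k • (single i 1 + single j 1) := by
    simp [smul_single]
  have := coeff_smul_pow_prime_pow_modEq (p := 2) k f (single i 1 + single j 1)
  rw [coeff_single_add_single_pow hij] at this
  rw [Nat.add_sub_cancel, hμ, Int.cast_ediv_two_of_modEq (by simpa using this)]
  push_cast
  ring

theorem cast_coeff_pow_two_pow_div_add_div (hn : 2 ≤ n) :
    ((coeff (single i 1 + single j 1) (f ^ 2 ^ n) / 2 ^ n +
        coeff (single i (2 ^ (n - 1)) + single j (2 ^ (n - 1))) (f ^ 2 ^ n) / 2 : ℤ) : ZMod 2) =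
      (1 + constantCoeff f) * coeff (single i 1) f * coeff (single j 1) f := by
  rw [Int.cast_add, cast_coeff_single_add_single_pow_two_pow_div hij f hn,
    cast_coeff_single_add_single_pow_two_pow_div_two hij f (by omega)]
  have h2 : (2 : ZMod 2) = 0 := rfl
  linear_combination ((constantCoeff f : ℤ) : ZMod 2) *
    ((coeff (single i 1 + single j 1) f : ℤ) : ZMod 2) * h2

end MvPolynomial

theorem AddMonoidHom.map_signed_sum {R G ι : Type*} [Ring R] [AddCommGroup G]
    [Module (ZMod 2) G] [Fintype ι] {S : Subring R} (Φ : S →+ G) (g : ι → S) (ε : ι → R)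
    (hε : ∀ t, ε t = 1 ∨ ε t = -1) {x : S} (hx : (x : R) = ∑ t, ε t * g t) :
    Φ x = ∑ t, Φ (g t) := by
  have hterm : ∀ t, ∃ s : S, (s : R) = ε t * g t ∧ Φ s = Φ (g t) := by
    intro t
    rcases hε t with h | h
    · exact ⟨g t, by simp [h], rfl⟩
    · exact ⟨-g t, by simp [h], by rw [map_neg, ZModModule.neg_eq_self]⟩
  choose s hs hΦ using hterm
  have hx' : x = ∑ t, s t := Subtype.ext (by simp [hx, hs])
  rw [hx', map_sum]
  exact Finset.sum_congr rfl fun t _ => hΦ t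

theorem stmt_14_general (n m v : ℕ) (hn : 2 ≤ n)
    (Pi : (Subring.closure
        (Set.range fun g : MvPolynomial (Fin m) ℤ => g ^ (2 ^ n))) →+
          ({p : Fin m × Fin m // p.1 < p.2} → ZMod 2))
    (hPi : ∀ (f : MvPolynomial (Fin m) ℤ) (p : {p : Fin m × Fin m // p.1 < p.2}),
      Pi ⟨f ^ 2 ^ n, Subring.subset_closure ⟨f, rfl⟩⟩ p =
        ((MvPolynomial.coeff (Finsupp.single p.1.1 1 + Finsupp.single p.1.2 1)
              (f ^ 2 ^ n) / 2 ^ n +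
            MvPolynomial.coeff
              (Finsupp.single p.1.1 (2 ^ (n - 1)) + Finsupp.single p.1.2 (2 ^ (n - 1)))
              (f ^ 2 ^ n) / 2 : ℤ) : ZMod 2)) :
    Nat.card (Pi '' {x : (Subring.closure
        (Set.range fun g : MvPolynomial (Fin m) ℤ => g ^ (2 ^ n))) |
      ∃ (f : Fin v → MvPolynomial (Fin m) ℤ) (ε : Fin v → MvPolynomial (Fin m) ℤ),
        (∀ t, ε t = 1 ∨ ε t = -1) ∧ (x : MvPolynomial (Fin m) ℤ) =
          ∑ t, ε t * f t ^ (2 ^ n)}) ≤ 2 ^ (v * m) := by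
  set w : MvPolynomial (Fin m) ℤ → Fin m → ZMod 2 :=
    fun f i => (1 + ((constantCoeff f : ℤ) : ZMod 2)) * ((coeff (single i 1) f : ℤ) : ZMod 2)
  have hpow : ∀ f, Pi ⟨f ^ 2 ^ n, Subring.subset_closure ⟨f, rfl⟩⟩ =
      fun p => w f p.1.1 * w f p.1.2 := by
    intro f
    funext p
    rw [hPi, cast_coeff_pow_two_pow_div_add_div p.2.ne f hn]
    linear_combination (((coeff (single p.1.1 1) f : ℤ) : ZMod 2) *
      ((coeff (single p.1.2 1) f : ℤ) : ZMod 2)) *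
      (zmod_two_pow_eq_self two_ne_zero (1 + ((constantCoeff f : ℤ) : ZMod 2))).symm
  calc Nat.card (Pi '' _)
      ≤ Nat.card (Set.range fun (ws : Fin v → Fin m → ZMod 2)
          (p : {p : Fin m × Fin m // p.1 < p.2}) => ∑ t, ws t p.1.1 * ws t p.1.2) := by
        refine Nat.card_mono (Set.toFinite _) ?_
        rintro _ ⟨x, ⟨f, ε, hε, hx⟩, rfl⟩
        refine ⟨fun t => w (f t), ?_⟩
        rw [Pi.map_signed_sum (fun t => ⟨f t ^ 2 ^ n, Subring.subset_closure ⟨f t, rfl⟩⟩) ε hε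
          hx]
        ext p
        simp [hpow]
    _ ≤ Nat.card (Fin v → Fin m → ZMod 2) := Finite.card_range_le _
    _ = 2 ^ (v * m) := by simp [← pow_mul, mul_comm]

/-- The image under `Π` of the set of signed sums of `v` `2^n`-th powers has at most
`2^(v·m)` elements. -/
theorem stmt_14 (n m v : ℕ) (hn : 2 ≤ n) (hm : 2 ≤ m) (hv : 1 ≤ v)
    (Pi : (Subring.closure
        (Set.range fun g : MvPolynomial (Fin m) ℤ => g ^ (2 ^ n))) →+
          ({p : Fin m × Fin m // p.1 < p.2} → ZMod 2))
    (hPi : ∀ (f : MvPolynomial (Fin m) ℤ) (p : {p : Fin m × Fin m // p.1 < p.2}),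
      Pi ⟨f ^ 2 ^ n, Subring.subset_closure ⟨f, rfl⟩⟩ p =
        ((MvPolynomial.coeff (Finsupp.single p.1.1 1 + Finsupp.single p.1.2 1)
              (f ^ 2 ^ n) / 2 ^ n +
            MvPolynomial.coeff
              (Finsupp.single p.1.1 (2 ^ (n - 1)) + Finsupp.single p.1.2 (2 ^ (n - 1)))
              (f ^ 2 ^ n) / 2 : ℤ) : ZMod 2)) :
    Nat.card (Pi '' {x : (Subring.closure
        (Set.range fun g : MvPolynomial (Fin m) ℤ => g ^ (2 ^ n))) |
      ∃ (f : Fin v → MvPolynomial (Fin m) ℤ) (ε : Fin v → MvPolynomial (Fin m) ℤ),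
        (∀ t, ε t = 1 ∨ ε t = -1) ∧ (x : MvPolynomial (Fin m) ℤ) =
          ∑ t, ε t * f t ^ (2 ^ n)}) ≤ 2 ^ (v * m) :=
  stmt_14_general n m v hn Pi hPi
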